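/- For the two-period problem (T = 2) with 0 ≤ q ≤ 1, the optimal first-period price π*_0(F) satisfies π*_0(F) ≥ π*_1(F) for all F ∈ [0,1), where π*_1(F) = C + 1 + W(e^{p+qF-(C+1)}). -/

import Mathlib

/-!
Let `w = W(e^{p+qF-(C+1)})`, so that `π* = C + 1 + w`. Writing `π = π* + t`, one finds
`e^{p+qF-π} = w e^{-t}`, and the one-period revenue `(π - C) R` is `< w` unless `t = 0`, because
`t + 1 < e^t`. So a first-period price `π < π*` earns strictly less now than `π*`, and, since `R` is
decreasing in the price, moves the state to a larger `F⁺`. The continuation value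
`V₁(F) = (1 - F) W(e^{p+qF-(C+1)})` is antitone on `[0, 1]` when `q ≤ 1`: raising `F` by `d` raises
`W` by at most the factor `e^d`, while `(1 - F - d) e^d ≤ 1 - F`. Hence `π*` beats `π`.
-/

noncomputable section

def R (p q F π : ℝ) : ℝ := Real.exp (p + q * F - π) / (1 + Real.exp (p + q * F - π))

def H (C p q F π : ℝ) : ℝ := (π - C) * (1 - F) * R p q F π

def Fplus (p q F π : ℝ) : ℝ := F + (1 - F) * R p q F π

open Set
open Real (exp exp_pos exp_add exp_neg exp_zero exp_lt_exp one_le_exp one_sub_le_exp_neg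
  add_one_lt_exp sigmoid sigmoid_def sigmoid_le sigmoid_nonneg sigmoid_le_one)

lemma one_sub_mul_exp_sub_le {x y : ℝ} (hx : 0 ≤ x) (hxy : x ≤ y) :
    (1 - y) * exp (y - x) ≤ 1 - x := by
  have h₁ : 1 ≤ exp (y - x) := one_le_exp (by linarith)
  have h₂ : (1 - (y - x)) * exp (y - x) ≤ 1 := by
    have := one_sub_le_exp_neg (y - x)
    calc (1 - (y - x)) * exp (y - x) ≤ exp (-(y - x)) * exp (y - x) := by gcongr
      _ = 1 := by rw [← exp_add]; simp
  nlinarith [mul_nonneg hx (sub_nonneg.mpr h₁)]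

lemma le_of_mul_exp_le_mul_exp {x y : ℝ} (hy : 0 ≤ y) (h : x * exp x ≤ y * exp y) : x ≤ y := by
  by_contra! hyx
  exact h.not_gt (mul_lt_mul'' hyx (exp_lt_exp.mpr hyx) hy (exp_pos y).le)

lemma le_mul_exp_of_mul_exp_le {x y d : ℝ} (hx : 0 ≤ x) (hxy : x ≤ y)
    (h : y * exp y ≤ x * exp x * exp d) : y ≤ x * exp d := by
  refine le_of_mul_le_mul_right ?_ (exp_pos y)
  calc y * exp y ≤ x * exp d * exp x := by linarith
    _ ≤ x * exp d * exp y := by gcongr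

lemma antitoneOn_one_sub_mul_W {q : ℝ} (hq0 : 0 ≤ q) (hq1 : q ≤ 1) {W : ℝ → ℝ}
    (hW : ∀ z : ℝ, 0 ≤ z → 0 ≤ W z ∧ W z * exp (W z) = z) (p c : ℝ) :
    AntitoneOn (fun F => (1 - F) * W (exp (p + q * F - c))) (Icc 0 1) := by
  intro F₁ hF₁ F₂ hF₂ h12
  obtain ⟨hw₁0, hw₁⟩ := hW _ (exp_pos (p + q * F₁ - c)).le
  obtain ⟨hw₂0, hw₂⟩ := hW _ (exp_pos (p + q * F₂ - c)).le
  have hqF : q * F₁ ≤ q * F₂ := mul_le_mul_of_nonneg_left h12 hq0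
  have hmono := le_of_mul_exp_le_mul_exp hw₂0 (by rw [hw₁, hw₂]; gcongr)
  have hgrowth : W (exp (p + q * F₂ - c)) ≤ W (exp (p + q * F₁ - c)) * exp (F₂ - F₁) := by
    refine le_mul_exp_of_mul_exp_le hw₁0 hmono ?_
    rw [hw₁, hw₂, ← exp_add]
    gcongr
    nlinarith
  calc (1 - F₂) * W (exp (p + q * F₂ - c))
      ≤ (1 - F₂) * (W (exp (p + q * F₁ - c)) * exp (F₂ - F₁)) :=
        mul_le_mul_of_nonneg_left hgrowth (by linarith [hF₂.2])
    _ = (1 - F₂) * exp (F₂ - F₁) * W (exp (p + q * F₁ - c)) := by ring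
    _ ≤ (1 - F₁) * W (exp (p + q * F₁ - c)) :=
        mul_le_mul_of_nonneg_right (one_sub_mul_exp_sub_le hF₁.1 h12) hw₁0

lemma R_eq_sigmoid (p q F π : ℝ) : R p q F π = sigmoid (p + q * F - π) := by
  rw [R, sigmoid_def, exp_neg]
  field_simp
  ring

lemma R_antitone (p q F : ℝ) : Antitone (R p q F) := fun π₁ π₂ h => by
  simp only [R_eq_sigmoid]
  exact sigmoid_le (by linarith)

lemma Fplus_antitone {F : ℝ} (hF : F ≤ 1) (p q : ℝ) : Antitone (Fplus p q F) := fun π₁ π₂ h => by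
  have := mul_le_mul_of_nonneg_left (R_antitone p q F h) (sub_nonneg.mpr hF)
  simp only [Fplus]
  linarith

lemma Fplus_mem_Icc {F : ℝ} (hF : F ∈ Icc (0 : ℝ) 1) (p q π : ℝ) :
    Fplus p q F π ∈ Icc (0 : ℝ) 1 := by
  have hR : R p q F π ∈ Icc (0 : ℝ) 1 := by
    rw [R_eq_sigmoid]; exact ⟨sigmoid_nonneg _, sigmoid_le_one _⟩
  have h₀ := mul_nonneg (sub_nonneg.mpr hF.2) hR.1
  have h₁ := mul_le_mul_of_nonneg_left hR.2 (sub_nonneg.mpr hF.2)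
  constructor <;> simp only [Fplus] <;> linarith [hF.1]

lemma pos_of_mul_exp_eq_exp {w a : ℝ} (h : w * exp w = exp a) : 0 < w :=
  pos_of_mul_pos_left (h ▸ exp_pos a) (exp_pos w).le

section Lambert

variable {C p q F w : ℝ} (hw : w * exp w = exp (p + q * F - (C + 1)))
include hw

lemma exp_eq_mul_exp_sub (π : ℝ) : exp (p + q * F - π) = w * exp (C + 1 + w - π) := by
  rw [show p + q * F - π = p + q * F - (C + 1) + (-w) + (C + 1 + w - π) by ring,
    exp_add, exp_add, ← hw, exp_neg]
  field_simp

lemma sub_mul_R_eq : (C + 1 + w - C) * R p q F (C + 1 + w) = w := by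
  rw [R, exp_eq_mul_exp_sub hw, sub_self, exp_zero, mul_one]
  have := pos_of_mul_exp_eq_exp hw
  field_simp
  ring

lemma sub_mul_R_lt {π : ℝ} (hπ : π ≠ C + 1 + w) : (π - C) * R p q F π < w := by
  have hw0 := pos_of_mul_exp_eq_exp hw
  set t := π - (C + 1 + w) with ht_def
  have ht : t + 1 < exp t := add_one_lt_exp (sub_ne_zero.mpr hπ)
  have hE : exp (p + q * F - π) = w * exp (-t) := by
    rw [exp_eq_mul_exp_sub hw]; congr 2; ring
  have hinv : exp t * exp (-t) = 1 := by rw [← exp_add]; simp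
  rw [R, hE, mul_div_assoc', div_lt_iff₀ (by positivity),
    show π - C = t + 1 + w by rw [ht_def]; ring]
  nlinarith [mul_lt_mul_of_pos_right ht (mul_pos hw0 (exp_pos (-t)))]

end Lambert

theorem stmt_14_general (C p q : ℝ) (hC : 0 ≤ C) (hq0 : 0 ≤ q) (hq1 : q ≤ 1)
    (W : ℝ → ℝ) (hW : ∀ z : ℝ, 0 ≤ z → 0 ≤ W z ∧ W z * Real.exp (W z) = z)
    (F : ℝ) (hF : F ∈ Set.Ico (0:ℝ) 1) (π₀ : ℝ)
    (hmax : IsMaxOn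
      (fun π : ℝ => H C p q F π +
        (1 - Fplus p q F π) * W (Real.exp (p + q * Fplus p q F π - (C + 1))))
      (Set.Ici (0:ℝ)) π₀) :
    C + 1 + W (Real.exp (p + q * F - (C + 1))) ≤ π₀ := by
  obtain ⟨hw0, hw⟩ := hW _ (exp_pos (p + q * F - (C + 1))).le
  set w := W (exp (p + q * F - (C + 1)))
  have hF' : F ∈ Icc (0 : ℝ) 1 := Ico_subset_Icc_self hF
  by_contra! hlt
  have hH : H C p q F π₀ < H C p q F (C + 1 + w) := by
    simp only [H, mul_comm _ (1 - F), mul_assoc]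
    rw [sub_mul_R_eq hw]
    exact mul_lt_mul_of_pos_left (sub_mul_R_lt hw hlt.ne) (by linarith [hF.2])
  have hV := antitoneOn_one_sub_mul_W hq0 hq1 hW p (C + 1) (Fplus_mem_Icc hF' p q _)
    (Fplus_mem_Icc hF' p q _) (Fplus_antitone hF'.2 p q hlt.le)
  have hopt := isMaxOn_iff.mp hmax (C + 1 + w) (by simp only [mem_Ici]; linarith)
  simp only at hV hopt
  linarith

/-- In the two-period problem with `0 ≤ q ≤ 1`, any optimal first-period price
dominates the optimal last-period price: `π*_0(F) ≥ π*_1(F) = C+1+W(e^{p+qF-(C+1)})`. -/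
theorem stmt_14 (C p q : ℝ) (hC : 0 ≤ C) (hq0 : 0 ≤ q) (hq1 : q ≤ 1)
    (W : ℝ → ℝ) (hW : ∀ z : ℝ, 0 ≤ z → 0 ≤ W z ∧ W z * Real.exp (W z) = z)
    (F : ℝ) (hF : F ∈ Set.Ico (0:ℝ) 1) (π₀ : ℝ) (hπ₀ : 0 ≤ π₀)
    (hmax : IsMaxOn
      (fun π : ℝ => H C p q F π +
        (1 - Fplus p q F π) * W (Real.exp (p + q * Fplus p q F π - (C + 1))))
      (Set.Ici (0:ℝ)) π₀) :
    C + 1 + W (Real.exp (p + q * F - (C + 1))) ≤ π₀ :=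
  stmt_14_general C p q hC hq0 hq1 W hW F hF π₀ hmax
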